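/- arXiv:math/0602594 — 2 statements merged into one kernel-verified Lean document; each statement's English description precedes it below -/
import Mathlib

section
/- One-period superhedging duality on a finite space: let S_0 ∈ ℝ^d with S_0 ∈ ri(conv{S_1(ω)}) (no arbitrage), and let f be a real random variable (contingent claim). Then the upper price π̄ = inf{x ∈ ℝ : ∃ γ ∈ ℝ^d, x + ⟨γ, S_1 − S_0⟩ ≥ f a.s.} equals sup{y : (S_0, y) ∈ ri(conv{(S_1(ω), f(ω)) : ω ∈ Ω})}. -/
/-!
Write `K` for the convex hull of the payoff points `(S₁ ω, f ω)`. A strategy `γ` superhedges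
at price `x` exactly when `K` lies in the half-space `{(s, t) | t ≤ x + ⟪γ, s - S₀⟫}`, so every
superhedging price bounds the slice `{y | (S₀, y) ∈ K}` from above; conversely, separating
`(S₀, x)` from the compact convex set `K` by Hahn–Banach produces a strategy as soon as `x`
exceeds the maximum of that slice. Hence the upper price is this maximum.

On a finite index set, the relative interior of `conv {p ω}` consists of the combinations with
all weights positive. No arbitrage therefore yields a point `(S₀, y₀)` in the relative interior
of `K`, and the segments from it to the points `(S₀, y)` of `K` stay in the relative interior;
so the supremum over the relative interior is the same maximum.
-/

open Finset Pointwise RealInnerProductSpace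

noncomputable section

abbrev E (d : ℕ) : Type := EuclideanSpace ℝ (Fin d)

open Filter Topology

theorem mem_intrinsicInterior_iff_eventually {𝕜 V P : Type*} [Ring 𝕜] [AddCommGroup V]
    [Module 𝕜 V] [TopologicalSpace P] [AddTorsor V P] {s : Set P} {x : P} :
    x ∈ intrinsicInterior 𝕜 s ↔ x ∈ affineSpan 𝕜 s ∧ ∀ᶠ z in 𝓝[affineSpan 𝕜 s] x, z ∈ s := by
  constructor
  · rintro ⟨y, hy, rfl⟩
    rw [nhdsWithin_eq_map_subtype_coe y.2]
    exact ⟨y.2, mem_interior_iff_mem_nhds.1 hy⟩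
  · rintro ⟨hx, h⟩
    rw [nhdsWithin_eq_map_subtype_coe hx] at h
    exact ⟨⟨x, hx⟩, mem_interior_iff_mem_nhds.2 h, rfl⟩

section FiniteConvexHull

variable {Ω : Type*} [Fintype Ω]

theorem convexHull_range_eq_image_stdSimplex {𝕜 F : Type*} [Field 𝕜] [LinearOrder 𝕜]
    [IsStrictOrderedRing 𝕜] [AddCommGroup F] [Module 𝕜 F] (p : Ω → F) :
    convexHull 𝕜 (Set.range p) = Fintype.linearCombination 𝕜 p '' stdSimplex 𝕜 Ω := by
  classical
  rw [← convexHull_rangle_single_eq_stdSimplex, LinearMap.image_convexHull, ← Set.range_comp]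
  congr 2
  ext ω
  simp

theorem mem_convexHull_range_iff {𝕜 F : Type*} [Field 𝕜] [LinearOrder 𝕜]
    [IsStrictOrderedRing 𝕜] [AddCommGroup F] [Module 𝕜 F] {p : Ω → F} {x : F} :
    x ∈ convexHull 𝕜 (Set.range p) ↔
      ∃ w : Ω → 𝕜, (∀ ω, 0 ≤ w ω) ∧ ∑ ω, w ω = 1 ∧ ∑ ω, w ω • p ω = x := by
  simp [convexHull_range_eq_image_stdSimplex, stdSimplex, Fintype.linearCombination_apply,
    and_assoc]

variable {F : Type*} [NormedAddCommGroup F] [NormedSpace ℝ F]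

theorem sum_smul_mem_intrinsicInterior_convexHull (p : Ω → F) {w : Ω → ℝ}
    (hw : ∀ ω, 0 < w ω) (hw₁ : ∑ ω, w ω = 1) :
    ∑ ω, w ω • p ω ∈ intrinsicInterior ℝ (convexHull ℝ (Set.range p)) := by
  set x := ∑ ω, w ω • p ω
  set Λ := Fintype.linearCombination ℝ fun ω => p ω - x
  have h_perturb : ∀ c : Ω → ℝ, (∀ ω, 0 < w ω + c ω - (∑ ω', c ω') * w ω) →
      x + Λ c ∈ convexHull ℝ (Set.range p) := by
    intro c hc
    refine mem_convexHull_range_iff.2 ⟨_, fun ω => (hc ω).le, ?_, ?_⟩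
    · simp [Finset.sum_add_distrib, Finset.sum_sub_distrib, ← Finset.mul_sum, hw₁]
    · simp only [Λ, Fintype.linearCombination_apply, add_smul, sub_smul, mul_smul, smul_sub,
        Finset.sum_add_distrib, Finset.sum_sub_distrib, ← Finset.smul_sum, ← Finset.sum_smul]
      abel
  set U := {c : Ω → ℝ | ∀ ω, 0 < w ω + c ω - (∑ ω', c ω') * w ω}
  have hU : IsOpen U := by
    simp only [U, Set.ofPred_forall]
    exact isOpen_iInter_of_finite fun ω => isOpen_lt continuous_const (by fun_prop)
  -- `Λ` is an open map onto its range, which contains the direction of the affine span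
  have h_nhds : Λ.rangeRestrict '' U ∈ 𝓝 0 :=
    (LinearMap.isOpenMap_of_finiteDimensional _ Λ.surjective_rangeRestrict U hU).mem_nhds
      ⟨0, by simpa [U] using hw, map_zero _⟩
  obtain ⟨O, hO, hOU⟩ := (mem_nhds_subtype _ _ _).1 h_nhds
  have hxA : x ∈ affineSpan ℝ (Set.range p) :=
    convexHull_subset_affineSpan _ (by simpa using h_perturb 0 (by simpa using hw))
  rw [mem_intrinsicInterior_iff_eventually, affineSpan_convexHull]
  refine ⟨hxA, ?_⟩
  have h_near : ∀ᶠ z in 𝓝 x, z - x ∈ O := (continuous_sub_right x).tendsto' x 0 (sub_self x) hO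
  filter_upwards [nhdsWithin_le_nhds h_near, self_mem_nhdsWithin] with z hzO hzA
  have hzΛ : z - x ∈ LinearMap.range Λ := by
    obtain ⟨v, hv₁, rfl⟩ := eq_affineCombination_of_mem_affineSpan_of_fintype hzA
    refine ⟨v, ?_⟩
    simp [Λ, Fintype.linearCombination_apply, affineCombination_eq_linear_combination _ _ _ hv₁,
      smul_sub, Finset.sum_sub_distrib, ← Finset.sum_smul, hv₁]
  obtain ⟨c, hc, hcz⟩ :=
    hOU (show (⟨z - x, hzΛ⟩ : LinearMap.range Λ) ∈ Subtype.val ⁻¹' O from hzO)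
  have : Λ c = z - x := congrArg Subtype.val hcz
  simpa [this] using h_perturb c hc

theorem exists_pos_weights_of_mem_intrinsicInterior_convexHull {p : Ω → F} {x : F}
    (hx : x ∈ intrinsicInterior ℝ (convexHull ℝ (Set.range p))) :
    ∃ w : Ω → ℝ, (∀ ω, 0 < w ω) ∧ ∑ ω, w ω = 1 ∧ ∑ ω, w ω • p ω = x := by
  have : Nonempty Ω :=
    Set.range_nonempty_iff_nonempty.1 (convexHull_nonempty_iff.1 ⟨x, intrinsicInterior_subset hx⟩)
  set n : ℝ := (Fintype.card Ω : ℝ)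
  have hn : 0 < n := by simp [n, Fintype.card_pos]
  set b := ∑ ω, n⁻¹ • p ω
  have hb : b ∈ affineSpan ℝ (Set.range p) :=
    convexHull_subset_affineSpan _ <| mem_convexHull_range_iff.2
      ⟨fun _ => n⁻¹, fun _ => by positivity, by simp [n], rfl⟩
  rw [mem_intrinsicInterior_iff_eventually, affineSpan_convexHull] at hx
  obtain ⟨hxA, hx⟩ := hx
  -- push `x` slightly away from the barycentre `b` while staying in the hull
  have h_path :
      Tendsto (fun t : ℝ => t • (x - b) + x) (𝓝 0) (𝓝[affineSpan ℝ (Set.range p)] x) := by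
    refine tendsto_nhdsWithin_iff.2 ⟨?_, Eventually.of_forall fun t => ?_⟩
    · simpa using ((continuous_id.smul continuous_const).add continuous_const).tendsto 0
        (f := fun t : ℝ => t • (x - b) + x)
    · exact AffineSubspace.smul_vsub_vadd_mem _ t hxA hb hxA
  obtain ⟨t, hz, ht⟩ := ((h_path.eventually hx).filter_mono nhdsWithin_le_nhds |>.and
    (self_mem_nhdsWithin (s := Set.Ioi 0))).exists
  obtain ⟨ν, hν, hν₁, hνz⟩ := mem_convexHull_range_iff.1 hz
  have ht : 0 < t := ht
  refine ⟨fun ω => (ν ω + t * n⁻¹) / (1 + t), fun ω => by have := hν ω; positivity, ?_, ?_⟩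
  · rw [← Finset.sum_div, Finset.sum_add_distrib, hν₁]
    simp [n]
    field_simp
  · have h_sum : ∑ ω, ((ν ω + t * n⁻¹) / (1 + t)) • p ω = (1 + t)⁻¹ • ((1 + t) • x) := by
      simp only [div_eq_inv_mul, mul_smul, add_smul, Finset.sum_add_distrib, ← Finset.smul_sum,
        hνz, b]
      congr 1
      module
    rw [h_sum, smul_smul, inv_mul_cancel₀ (by positivity), one_smul]

theorem smul_add_smul_mem_intrinsicInterior_convexHull {p : Ω → F} {a b : F}
    (ha : a ∈ intrinsicInterior ℝ (convexHull ℝ (Set.range p)))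
    (hb : b ∈ convexHull ℝ (Set.range p)) {θ : ℝ} (hθ₀ : 0 < θ) (hθ₁ : θ ≤ 1) :
    (1 - θ) • b + θ • a ∈ intrinsicInterior ℝ (convexHull ℝ (Set.range p)) := by
  obtain ⟨l, hl, hl₁, rfl⟩ := exists_pos_weights_of_mem_intrinsicInterior_convexHull ha
  obtain ⟨μ, hμ, hμ₁, rfl⟩ := mem_convexHull_range_iff.1 hb
  have h := sum_smul_mem_intrinsicInterior_convexHull p (w := fun ω => (1 - θ) * μ ω + θ * l ω)
    (fun ω => by nlinarith [hμ ω, hl ω])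
    (by simp [Finset.sum_add_distrib, ← Finset.mul_sum, hμ₁, hl₁])
  simpa only [add_smul, mul_smul, Finset.sum_add_distrib, ← Finset.smul_sum] using h

end FiniteConvexHull

section Superhedging

variable {Ω H : Type*} [NormedAddCommGroup H] [InnerProductSpace ℝ H]
  (S₀ : H) (S₁ : Ω → H) (f : Ω → ℝ)

def superhedgingPrices : Set ℝ := {x | ∃ γ : H, ∀ ω, f ω ≤ x + ⟪γ, S₁ ω - S₀⟫}

def payoffHull : Set (H × ℝ) := convexHull ℝ (Set.range fun ω => (S₁ ω, f ω))

variable {S₀ S₁ f}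

theorem le_of_mem_superhedgingPrices {x y : ℝ} (hx : x ∈ superhedgingPrices S₀ S₁ f)
    (hy : (S₀, y) ∈ payoffHull S₁ f) : y ≤ x := by
  obtain ⟨γ, hγ⟩ := hx
  let φ : H × ℝ →L[ℝ] ℝ :=
    ContinuousLinearMap.snd ℝ H ℝ - (innerSL ℝ γ).comp (ContinuousLinearMap.fst ℝ H ℝ)
  have h_half : payoffHull S₁ f ⊆ {q | φ q ≤ x - ⟪γ, S₀⟫} := by
    refine convexHull_min ?_ (convex_halfSpace_le φ.isLinear _)
    rintro _ ⟨ω, rfl⟩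
    have := hγ ω
    simp only [Set.mem_ofPred_eq, φ, sub_apply, ContinuousLinearMap.comp_apply,
      innerSL_apply_apply, ContinuousLinearMap.coe_snd', ContinuousLinearMap.coe_fst',
      inner_sub_right] at this ⊢
    linarith
  simpa [φ] using h_half hy

theorem isClosed_payoffHull [Finite Ω] : IsClosed (payoffHull S₁ f) :=
  (Set.finite_range _).isClosed_convexHull ℝ

theorem mem_superhedgingPrices_of_notMem_payoffHull [Finite Ω] [CompleteSpace H] {x y : ℝ}
    (hy : (S₀, y) ∈ payoffHull S₁ f) (hyx : y < x) (hx : (S₀, x) ∉ payoffHull S₁ f) :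
    x ∈ superhedgingPrices S₀ S₁ f := by
  obtain ⟨φ, u, hφK, hφx⟩ :=
    geometric_hahn_banach_closed_point (convex_convexHull ℝ _ : Convex ℝ (payoffHull S₁ f))
      isClosed_payoffHull hx
  set c := φ (0, 1)
  set ψ := φ.comp (ContinuousLinearMap.inl ℝ H ℝ)
  have hφ : ∀ h t, φ (h, t) = ψ h + t * c := by
    intro h t
    have : ((h, t) : H × ℝ) = (h, 0) + t • (0, 1) := by simp
    rw [this, map_add, map_smul, smul_eq_mul]
    rfl
  have hc : 0 < c := by
    have := hφK _ hy
    rw [hφ] at this hφx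
    nlinarith
  refine ⟨-c⁻¹ • (InnerProductSpace.toDual ℝ H).symm ψ, fun ω => ?_⟩
  have hω := (hφK _ (subset_convexHull ℝ _ ⟨ω, rfl⟩)).trans hφx
  rw [hφ, hφ] at hω
  rw [real_inner_smul_left, InnerProductSpace.toDual_symm_apply, map_sub]
  field_simp
  linarith

theorem superhedgingPrices_nonempty [Finite Ω] : (superhedgingPrices S₀ S₁ f).Nonempty := by
  obtain ⟨M, hM⟩ := (Set.finite_range f).bddAbove
  exact ⟨M, 0, fun ω => by simpa using hM ⟨ω, rfl⟩⟩

theorem isGreatest_slice_payoffHull [Finite Ω] {y₀ : ℝ} (hy₀ : (S₀, y₀) ∈ payoffHull S₁ f) :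
    IsGreatest {y | (S₀, y) ∈ payoffHull S₁ f} (sSup {y | (S₀, y) ∈ payoffHull S₁ f}) := by
  obtain ⟨x, hx⟩ := superhedgingPrices_nonempty (S₀ := S₀) (S₁ := S₁) (f := f)
  have h_bdd : BddAbove {y | (S₀, y) ∈ payoffHull S₁ f} :=
    ⟨x, fun y hy => le_of_mem_superhedgingPrices hx hy⟩
  refine ⟨IsClosed.csSup_mem ?_ ⟨y₀, hy₀⟩ h_bdd, fun y hy => le_csSup h_bdd hy⟩
  exact isClosed_payoffHull.preimage (Continuous.prodMk_right S₀)

theorem csInf_superhedgingPrices_eq [Finite Ω] [CompleteSpace H] {y₀ : ℝ}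
    (hy₀ : (S₀, y₀) ∈ payoffHull S₁ f) :
    sInf (superhedgingPrices S₀ S₁ f) = sSup {y | (S₀, y) ∈ payoffHull S₁ f} := by
  obtain ⟨h_mem, h_ub⟩ := isGreatest_slice_payoffHull hy₀
  refine le_antisymm (le_of_forall_gt_imp_ge_of_dense fun x hx => ?_)
    (le_csInf superhedgingPrices_nonempty fun x hx => le_of_mem_superhedgingPrices hx h_mem)
  refine csInf_le ⟨_, fun x' hx' => le_of_mem_superhedgingPrices hx' h_mem⟩ ?_
  exact mem_superhedgingPrices_of_notMem_payoffHull h_mem hx fun h => (h_ub h).not_gt hx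

theorem csSup_slice_intrinsicInterior_eq [Fintype Ω] {y₀ : ℝ}
    (hy₀ : (S₀, y₀) ∈ intrinsicInterior ℝ (payoffHull S₁ f)) :
    sSup {y | (S₀, y) ∈ intrinsicInterior ℝ (payoffHull S₁ f)} =
      sSup {y | (S₀, y) ∈ payoffHull S₁ f} := by
  obtain ⟨h_mem, h_ub⟩ := isGreatest_slice_payoffHull (intrinsicInterior_subset hy₀)
  set yBar := sSup {y | (S₀, y) ∈ payoffHull S₁ f}
  have h_le : yBar ∈ upperBounds {y | (S₀, y) ∈ intrinsicInterior ℝ (payoffHull S₁ f)} :=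
    fun y hy => h_ub (intrinsicInterior_subset (s := payoffHull S₁ f) hy)
  refine le_antisymm (csSup_le ⟨y₀, hy₀⟩ h_le) ?_
  have h_segment : ∀ θ ∈ Set.Ioc (0 : ℝ) 1,
      (1 - θ) * yBar + θ * y₀ ∈ {y | (S₀, y) ∈ intrinsicInterior ℝ (payoffHull S₁ f)} := by
    rintro θ ⟨hθ₀, hθ₁⟩
    have h_eq : (1 - θ) • (S₀, yBar) + θ • (S₀, y₀) = (S₀, (1 - θ) * yBar + θ * y₀) := by
      ext <;> simp [← add_smul]
    have h := smul_add_smul_mem_intrinsicInterior_convexHull hy₀ h_mem hθ₀ hθ₁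
    rwa [h_eq] at h
  have h_lim : Tendsto (fun θ : ℝ => (1 - θ) * yBar + θ * y₀) (𝓝[>] 0) (𝓝 yBar) := by
    have : Continuous fun θ : ℝ => (1 - θ) * yBar + θ * y₀ := by fun_prop
    simpa using (this.tendsto 0).mono_left nhdsWithin_le_nhds
  refine le_of_tendsto h_lim ?_
  filter_upwards [Ioc_mem_nhdsGT one_pos] with θ hθ
  exact le_csSup ⟨yBar, h_le⟩ (h_segment θ hθ)

end Superhedging

theorem one_period_upper_price_general {Ω : Type} [Fintype Ω] {d : ℕ}
    (S₀ : E d) (S₁ : Ω → E d)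
    (hNA : S₀ ∈ intrinsicInterior ℝ (convexHull ℝ (Set.range S₁)))
    (f : Ω → ℝ) :
    sInf {x : ℝ | ∃ γ : E d, ∀ ω, f ω ≤ x + ⟪γ, S₁ ω - S₀⟫} =
      sSup {y : ℝ | (S₀, y) ∈
        intrinsicInterior ℝ (convexHull ℝ (Set.range fun ω => (S₁ ω, f ω)))} := by
  obtain ⟨l, hl, hl₁, hlS₀⟩ := exists_pos_weights_of_mem_intrinsicInterior_convexHull hNA
  have h₀ : (S₀, ∑ ω, l ω * f ω) ∈ intrinsicInterior ℝ (payoffHull S₁ f) := by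
    have h := sum_smul_mem_intrinsicInterior_convexHull (fun ω => (S₁ ω, f ω)) hl hl₁
    rwa [show ∑ ω, l ω • (S₁ ω, f ω) = (∑ ω, l ω • S₁ ω, ∑ ω, l ω * f ω) from
      Prod.ext (by simp [Prod.fst_sum]) (by simp [Prod.snd_sum]), hlS₀] at h
  exact (csInf_superhedgingPrices_eq (intrinsicInterior_subset h₀)).trans
    (csSup_slice_intrinsicInterior_eq h₀).symm

/-- one-period superhedging duality: under no arbitrage
(S_0 ∈ ri conv{S_1(ω)}), the upper price of a claim f equals
sup{y : (S_0, y) ∈ ri(conv{(S_1(ω), f(ω))})}. -/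
theorem one_period_upper_price {Ω : Type} [Fintype Ω] [Nonempty Ω] {d : ℕ}
    (P : Ω → ℝ) (hP : ∀ ω, 0 < P ω) (hP1 : ∑ ω, P ω = 1)
    (S₀ : E d) (S₁ : Ω → E d)
    (hNA : S₀ ∈ intrinsicInterior ℝ (convexHull ℝ (Set.range S₁)))
    (f : Ω → ℝ) :
    sInf {x : ℝ | ∃ γ : E d, ∀ ω, f ω ≤ x + ⟪γ, S₁ ω - S₀⟫} =
      sSup {y : ℝ | (S₀, y) ∈
        intrinsicInterior ℝ (convexHull ℝ (Set.range fun ω => (S₁ ω, f ω)))} :=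
  one_period_upper_price_general S₀ S₁ hNA f
end
end

section
/- Absence of arbitrage via consistent prices: on a finite filtered probability space, if there exists a P-martingale Z with Z_t ∈ ri K_t* a.s. for all t (a strictly consistent price process), then the currency market satisfies the no-arbitrage condition: any self-financing portfolio process θ with θ_T ∈ ℝ_+^d a.s. satisfies θ_T ∈ K_T ∩ (−K_T) a.s. (equivalently, the liquidation value of θ_T is zero). -/
/-!
Pair a self-financing portfolio `θ` with a strictly consistent price process `Z`. Every trade
`θ (t+1) - θ t` lies in `-K (t+1)`, so it pairs non-positively with `Z (t+1) ∈ K (t+1)*`; and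
`⟪θ t, Z (t+1)⟫` has the same expectation as `⟪θ t, Z t⟫`, because `θ t` is known at time `t` and
`Z` is a martingale. Hence `E ⟪θ T, Z T⟫ ≤ 0`. By the triangle inequality for the bid-ask matrix,
`K*` contains a strictly positive vector, so every point of its relative interior, in particular
`Z T`, is strictly positive; together with `θ T ≥ 0` this forces `θ T = 0`.
-/

open Finset Pointwise RealInnerProductSpace

noncomputable section

def solvencyCone {d : ℕ} (π : Fin d → Fin d → ℝ) : Set (E d) :=
  {x | ∃ (a : Fin d → ℝ) (b : Fin d → Fin d → ℝ),
    (∀ i, 0 ≤ a i) ∧ (∀ i j, 0 ≤ b i j) ∧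
    x = ∑ i, a i • EuclideanSpace.single i (1 : ℝ) +
        ∑ i, ∑ j, b i j •
          (π i j • EuclideanSpace.single i (1 : ℝ) - EuclideanSpace.single j (1 : ℝ))}

def dualCone {d : ℕ} (K : Set (E d)) : Set (E d) :=
  {y | ∀ x ∈ K, 0 ≤ ⟪x, y⟫}

theorem exists_pos_add_smul_sub_mem_of_mem_intrinsicInterior {V : Type*} [AddCommGroup V]
    [Module ℝ V] [TopologicalSpace V] [IsTopologicalAddGroup V] [ContinuousSMul ℝ V]
    {S : Set V} {x y : V} (hx : x ∈ intrinsicInterior ℝ S) (hy : y ∈ S) :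
    ∃ ε : ℝ, 0 < ε ∧ x + ε • (x - y) ∈ S := by
  obtain ⟨p, hp, rfl⟩ := mem_intrinsicInterior.mp hx
  have hline : ∀ t : ℝ, t • ((p : V) - y) + p ∈ affineSpan ℝ S := fun t =>
    AffineSubspace.smul_vsub_vadd_mem _ t p.2 (subset_affineSpan ℝ S hy) p.2
  let c : ℝ → affineSpan ℝ S := fun t => ⟨t • ((p : V) - y) + p, hline t⟩
  have hc : Continuous c := by fun_prop
  have hnear : ∀ᶠ t in nhds 0, c t ∈ interior (((↑) : affineSpan ℝ S → V) ⁻¹' S) :=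
    hc.continuousAt.preimage_mem_nhds (isOpen_interior.mem_nhds (by simpa [c] using hp))
  obtain ⟨ε, hεS, hε⟩ := ((hnear.filter_mono nhdsWithin_le_nhds).and
    (self_mem_nhdsWithin (s := Set.Ioi (0 : ℝ)))).exists
  exact ⟨ε, hε, by simpa [c, add_comm] using interior_subset hεS⟩

theorem mem_solvencyCone_of_nonneg {d : ℕ} (π : Fin d → Fin d → ℝ) {x : E d}
    (hx : ∀ i, 0 ≤ x i) : x ∈ solvencyCone π := by
  refine ⟨fun i => x i, 0, hx, fun _ _ => le_rfl, ?_⟩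
  ext j
  simp [Pi.single_apply]

theorem smul_single_sub_single_mem_solvencyCone {d : ℕ} (π : Fin d → Fin d → ℝ) (i j : Fin d) :
    π i j • EuclideanSpace.single i (1 : ℝ) - EuclideanSpace.single j (1 : ℝ)
      ∈ solvencyCone π := by
  refine ⟨0, fun k l => (if k = i then 1 else 0) * (if l = j then 1 else 0), fun _ => le_rfl,
    fun _ _ => by positivity, ?_⟩
  simp [ite_smul, sum_ite_eq']

theorem mem_dualCone_solvencyCone_iff {d : ℕ} {π : Fin d → Fin d → ℝ} {z : E d} :
    z ∈ dualCone (solvencyCone π) ↔ (∀ i, 0 ≤ z i) ∧ ∀ i j, z j ≤ π i j * z i := by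
  refine ⟨fun hz => ⟨fun i => ?_, fun i j => ?_⟩, fun ⟨hpos, hπ⟩ => ?_⟩
  · simpa [EuclideanSpace.inner_single_left] using hz _ (mem_solvencyCone_of_nonneg π
      (x := EuclideanSpace.single i 1) fun j => by simp [apply_ite])
  · have := hz _ (smul_single_sub_single_mem_solvencyCone π i j)
    simp only [inner_sub_left, real_inner_smul_left, EuclideanSpace.inner_single_left,
      map_one, one_mul] at this
    linarith
  · rintro x ⟨a, b, ha, hb, rfl⟩
    simp only [inner_add_left, sum_inner, real_inner_smul_left, inner_sub_left,
      EuclideanSpace.inner_single_left, map_one, one_mul]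
    refine add_nonneg (sum_nonneg fun i _ => mul_nonneg (ha i) (hpos i))
      (sum_nonneg fun i _ => sum_nonneg fun j _ => mul_nonneg (hb i j) ?_)
    linarith [hπ i j]

theorem exists_pos_mem_dualCone_solvencyCone {d : ℕ} [Nonempty (Fin d)]
    {π : Fin d → Fin d → ℝ} (hπpos : ∀ i j, 0 < π i j)
    (hπtri : ∀ i j k, π i j ≤ π i k * π k j) :
    ∃ y ∈ dualCone (solvencyCone π), ∀ i, 0 < y i := by
  -- the cheapest price of currency `j` in terms of any other currency
  let y : E d := WithLp.toLp 2 fun j => univ.inf' univ_nonempty fun k => π k j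
  have hy : ∀ j, 0 < y j := fun j => (lt_inf'_iff univ_nonempty).mpr fun k _ => hπpos k j
  refine ⟨y, mem_dualCone_solvencyCone_iff.mpr ⟨fun j => (hy j).le, fun i j => ?_⟩, hy⟩
  obtain ⟨k, -, hk⟩ := exists_mem_eq_inf' univ_nonempty fun k => π k i
  calc y j ≤ π k j := inf'_le _ (mem_univ k)
    _ ≤ π k i * π i j := hπtri k j i
    _ = π i j * y i := by rw [mul_comm]; exact congrArg _ hk.symm

theorem pos_of_mem_intrinsicInterior_dualCone_solvencyCone {d : ℕ} {π : Fin d → Fin d → ℝ}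
    (hπpos : ∀ i j, 0 < π i j) (hπtri : ∀ i j k, π i j ≤ π i k * π k j) {z : E d}
    (hz : z ∈ intrinsicInterior ℝ (dualCone (solvencyCone π))) (i : Fin d) : 0 < z i := by
  have : Nonempty (Fin d) := ⟨i⟩
  obtain ⟨y, hy, hypos⟩ := exists_pos_mem_dualCone_solvencyCone hπpos hπtri
  obtain ⟨ε, hε, hmem⟩ := exists_pos_add_smul_sub_mem_of_mem_intrinsicInterior hz hy
  -- moving `z` away from `y` stays in `K*`, impossible if `z i = 0 < y i`
  have := (mem_dualCone_solvencyCone_iff.mp hmem).1 i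
  simp only [PiLp.add_apply, PiLp.smul_apply, PiLp.sub_apply, smul_eq_mul] at this
  nlinarith [hypos i]

theorem inner_nonpos_of_mem_neg_of_mem_dualCone {d : ℕ} {K : Set (E d)} {x z : E d}
    (hx : x ∈ -K) (hz : z ∈ dualCone K) : ⟪x, z⟫ ≤ 0 := by
  have := hz _ (Set.mem_neg.mp hx)
  rwa [inner_neg_left, neg_nonneg] at this

theorem inner_nonneg_of_nonneg {d : ℕ} {x z : E d} (hx : ∀ i, 0 ≤ x i) (hz : ∀ i, 0 ≤ z i) :
    0 ≤ ⟪x, z⟫ := by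
  simpa [PiLp.inner_apply, mul_comm] using sum_nonneg fun i _ => mul_nonneg (hx i) (hz i)

theorem eq_zero_of_inner_nonpos {d : ℕ} {x z : E d} (hx : ∀ i, 0 ≤ x i) (hz : ∀ i, 0 < z i)
    (h : ⟪x, z⟫ ≤ 0) : x = 0 := by
  have hterms : ∀ i ∈ univ, 0 ≤ x i * z i := fun i _ => mul_nonneg (hx i) (hz i).le
  have hsum : ∑ i, x i * z i = 0 :=
    le_antisymm (by simpa [PiLp.inner_apply, mul_comm] using h) (sum_nonneg hterms)
  ext i
  exact (mul_eq_zero.mp ((sum_eq_zero_iff_of_nonneg hterms).mp hsum i (mem_univ i))).resolve_right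
    (hz i).ne'

/-- The conditional expectation of `X` on the atom `A`, under the weights `P`. -/
def condAvg {Ω V : Type*} [AddCommGroup V] [Module ℝ V] (P : Ω → ℝ) (A : Finset Ω)
    (X : Ω → V) : V :=
  (∑ ω ∈ A, P ω)⁻¹ • ∑ ω ∈ A, P ω • X ω

theorem condAvg_inner_of_forall_mem_eq {Ω F : Type*} [NormedAddCommGroup F]
    [InnerProductSpace ℝ F] {P : Ω → ℝ} {s : Finset Ω} {f X : Ω → F} {ω₀ : Ω}
    (hf : ∀ ω ∈ s, f ω = f ω₀) : condAvg P s (fun ω => ⟪f ω, X ω⟫) = ⟪f ω₀, condAvg P s X⟫ := by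
  simp only [condAvg, real_inner_smul_right, inner_sum, smul_eq_mul]
  congr 1
  exact sum_congr rfl fun ω hω => by rw [hf ω hω]

section Partition

variable {Ω : Type*} [Fintype Ω] {P : Ω → ℝ} {A : Ω → Finset Ω}

theorem sum_smul_condAvg {V : Type*} [AddCommGroup V] [Module ℝ V] (hP : ∀ ω, 0 < P ω)
    (hmem : ∀ ω, ω ∈ A ω) (hpart : ∀ ω ω', ω' ∈ A ω → A ω' = A ω) (X : Ω → V) :
    ∑ ω, P ω • condAvg P (A ω) X = ∑ ω, P ω • X ω := by
  have hsymm : ∀ ω ω', (ω ∈ univ ∧ ω' ∈ A ω) ↔ (ω ∈ A ω' ∧ ω' ∈ univ) := fun ω ω' => by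
    simp only [mem_univ, true_and, and_true]
    exact ⟨fun h => hpart ω ω' h ▸ hmem ω, fun h => hpart ω' ω h ▸ hmem ω'⟩
  have hatom : ∀ ω', 0 < ∑ ω ∈ A ω', P ω := fun ω' =>
    sum_pos (fun ω _ => hP ω) ⟨ω', hmem ω'⟩
  calc ∑ ω, P ω • condAvg P (A ω) X
      = ∑ ω, ∑ ω' ∈ A ω, (P ω / ∑ u ∈ A ω, P u) • P ω' • X ω' := by
        simp only [condAvg, smul_sum, smul_smul, div_eq_mul_inv, mul_assoc]
    _ = ∑ ω', ∑ ω ∈ A ω', (P ω / ∑ u ∈ A ω', P u) • P ω' • X ω' := by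
        rw [sum_comm' hsymm]
        refine sum_congr rfl fun ω' _ => sum_congr rfl fun ω hω => ?_
        rw [hpart ω' ω hω]
    _ = ∑ ω', P ω' • X ω' := by
        refine sum_congr rfl fun ω' _ => ?_
        rw [← sum_smul, ← sum_div, div_self (hatom ω').ne', one_smul]

theorem sum_mul_inner_eq_of_condAvg_eq {F : Type*} [NormedAddCommGroup F]
    [InnerProductSpace ℝ F] (hP : ∀ ω, 0 < P ω) (hmem : ∀ ω, ω ∈ A ω)
    (hpart : ∀ ω ω', ω' ∈ A ω → A ω' = A ω) {f Y Z : Ω → F}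
    (hf : ∀ ω, ∀ ω' ∈ A ω, f ω' = f ω) (hY : ∀ ω, condAvg P (A ω) Y = Z ω) :
    ∑ ω, P ω * ⟪f ω, Y ω⟫ = ∑ ω, P ω * ⟪f ω, Z ω⟫ := by
  have htower := sum_smul_condAvg hP hmem hpart fun ω => ⟪f ω, Y ω⟫
  simp only [smul_eq_mul, condAvg_inner_of_forall_mem_eq (hf _), hY] at htower
  exact htower.symm

end Partition

theorem sum_mul_inner_nonpos {Ω F : Type*} [Fintype Ω] [NormedAddCommGroup F]
    [InnerProductSpace ℝ F] {P : Ω → ℝ} (hP : ∀ ω, 0 < P ω) {A : ℕ → Ω → Finset Ω}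
    (hmem : ∀ t ω, ω ∈ A t ω) (hpart : ∀ t ω ω', ω' ∈ A t ω → A t ω' = A t ω) {T : ℕ}
    {θ Z : ℕ → Ω → F} (hθ : ∀ t ω ω', t ≤ T → ω' ∈ A t ω → θ t ω' = θ t ω)
    (hZ : ∀ t ω, t < T → condAvg P (A t ω) (Z (t + 1)) = Z t ω)
    (h0 : ∀ ω, ⟪θ 0 ω, Z 0 ω⟫ ≤ 0)
    (hstep : ∀ t ω, t < T → ⟪θ (t + 1) ω - θ t ω, Z (t + 1) ω⟫ ≤ 0) :
    ∀ t ≤ T, ∑ ω, P ω * ⟪θ t ω, Z t ω⟫ ≤ 0 := by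
  intro t ht
  induction t with
  | zero => exact sum_nonpos fun ω _ => mul_nonpos_of_nonneg_of_nonpos (hP ω).le (h0 ω)
  | succ t ih =>
    calc ∑ ω, P ω * ⟪θ (t + 1) ω, Z (t + 1) ω⟫
        = ∑ ω, P ω * ⟪θ (t + 1) ω - θ t ω, Z (t + 1) ω⟫ + ∑ ω, P ω * ⟪θ t ω, Z (t + 1) ω⟫ := by
          simp only [← sum_add_distrib, ← mul_add, ← inner_add_left, sub_add_cancel]
      _ = ∑ ω, P ω * ⟪θ (t + 1) ω - θ t ω, Z (t + 1) ω⟫ + ∑ ω, P ω * ⟪θ t ω, Z t ω⟫ := by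
          rw [sum_mul_inner_eq_of_condAvg_eq hP (hmem t) (hpart t)
            (fun ω ω' => hθ t ω ω' (by omega)) (fun ω => hZ t ω ht)]
      _ ≤ 0 := add_nonpos (sum_nonpos fun ω _ => mul_nonpos_of_nonneg_of_nonpos (hP ω).le
          (hstep t ω ht)) (ih (by omega))

theorem no_arbitrage_of_strictly_consistent_general {Ω : Type} [Fintype Ω] {d : ℕ} (T : ℕ)
    (P : Ω → ℝ) (hP : ∀ ω, 0 < P ω)
    (atom : ℕ → Ω → Finset Ω)
    (hmem : ∀ t ω, ω ∈ atom t ω)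
    (hpart : ∀ t ω ω', ω' ∈ atom t ω → atom t ω' = atom t ω)
    -- adapted bid-ask matrix process and solvency cones
    (π : ℕ → Ω → Fin d → Fin d → ℝ)
    (hπpos : ∀ t ω i j, 0 < π t ω i j)
    (hπtri : ∀ t ω i j k, π t ω i j ≤ π t ω i k * π t ω k j)
    (K : ℕ → Ω → Set (E d)) (hK : ∀ t ω, K t ω = solvencyCone (π t ω))
    -- a strictly consistent price process Z
    (Z : ℕ → Ω → E d)
    (hZri : ∀ t ω, t ≤ T → Z t ω ∈ intrinsicInterior ℝ (dualCone (K t ω)))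
    (hZmart : ∀ t ω, t < T →
      (∑ ω' ∈ atom t ω, P ω')⁻¹ • ∑ ω' ∈ atom t ω, P ω' • Z (t + 1) ω' = Z t ω) :
    -- no arbitrage
    ∀ θ : ℕ → Ω → E d,
      (∀ t ω ω', t ≤ T → ω' ∈ atom t ω → θ t ω' = θ t ω) →
      (∀ ω, θ 0 ω ∈ -K 0 ω) →
      (∀ t ω, t < T → θ (t + 1) ω - θ t ω ∈ -K (t + 1) ω) →
      (∀ ω i, 0 ≤ θ T ω i) →
      ∀ ω, θ T ω ∈ K T ω ∩ -K T ω := by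
  intro θ hθad hθ0 hstep hθT ω
  have hZdual : ∀ t ω, t ≤ T → Z t ω ∈ dualCone (K t ω) := fun t ω ht =>
    intrinsicInterior_subset (hZri t ω ht)
  have hZpos : ∀ ω i, 0 < Z T ω i := fun ω =>
    pos_of_mem_intrinsicInterior_dualCone_solvencyCone (hπpos T ω) (hπtri T ω)
      (hK T ω ▸ hZri T ω le_rfl)
  have hvalue : ∑ ω, P ω * ⟪θ T ω, Z T ω⟫ ≤ 0 :=
    sum_mul_inner_nonpos hP hmem hpart hθad hZmart
      (fun ω => inner_nonpos_of_mem_neg_of_mem_dualCone (hθ0 ω) (hZdual 0 ω T.zero_le))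
      (fun t ω ht => inner_nonpos_of_mem_neg_of_mem_dualCone (hstep t ω ht) (hZdual _ ω ht))
      T le_rfl
  have hterm : P ω * ⟪θ T ω, Z T ω⟫ ≤ 0 :=
    (single_le_sum (fun ω _ => mul_nonneg (hP ω).le (inner_nonneg_of_nonneg (hθT ω)
      fun i => (hZpos ω i).le)) (mem_univ ω)).trans hvalue
  have hθzero : θ T ω = 0 :=
    eq_zero_of_inner_nonpos (hθT ω) (hZpos ω) (nonpos_of_mul_nonpos_right hterm (hP ω))
  rw [hθzero, hK, Set.mem_inter_iff, Set.mem_neg, neg_zero, and_self]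
  exact mem_solvencyCone_of_nonneg _ fun _ => le_rfl

/-- if a strictly consistent price process exists, the currency market
satisfies the no-arbitrage condition: any self-financing θ with θ_T ∈ ℝ_+^d a.s. has
θ_T ∈ K_T ∩ (−K_T) a.s. -/
theorem no_arbitrage_of_strictly_consistent {Ω : Type} [Fintype Ω] [DecidableEq Ω]
    [Nonempty Ω] {d : ℕ} (T : ℕ)
    (P : Ω → ℝ) (hP : ∀ ω, 0 < P ω) (hP1 : ∑ ω, P ω = 1)
    (atom : ℕ → Ω → Finset Ω)
    (hmem : ∀ t ω, ω ∈ atom t ω)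
    (hpart : ∀ t ω ω', ω' ∈ atom t ω → atom t ω' = atom t ω)
    (hrefine : ∀ t ω, atom (t + 1) ω ⊆ atom t ω)
    (h0 : ∀ ω, atom 0 ω = Finset.univ)
    (hT : ∀ ω, atom T ω = {ω})
    -- adapted bid-ask matrix process and solvency cones
    (π : ℕ → Ω → Fin d → Fin d → ℝ)
    (hπpos : ∀ t ω i j, 0 < π t ω i j)
    (hπdiag : ∀ t ω i, π t ω i i = 1)
    (hπtri : ∀ t ω i j k, π t ω i j ≤ π t ω i k * π t ω k j)
    (hπadapted : ∀ t ω ω', t ≤ T → ω' ∈ atom t ω → π t ω' = π t ω)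
    (K : ℕ → Ω → Set (E d)) (hK : ∀ t ω, K t ω = solvencyCone (π t ω))
    -- a strictly consistent price process Z
    (Z : ℕ → Ω → E d)
    (hZadapted : ∀ t ω ω', t ≤ T → ω' ∈ atom t ω → Z t ω' = Z t ω)
    (hZri : ∀ t ω, t ≤ T → Z t ω ∈ intrinsicInterior ℝ (dualCone (K t ω)))
    (hZmart : ∀ t ω, t < T →
      (∑ ω' ∈ atom t ω, P ω')⁻¹ • ∑ ω' ∈ atom t ω, P ω' • Z (t + 1) ω' = Z t ω) :
    -- no arbitrage
    ∀ θ : ℕ → Ω → E d,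
      (∀ t ω ω', t ≤ T → ω' ∈ atom t ω → θ t ω' = θ t ω) →
      (∀ ω, θ 0 ω ∈ -K 0 ω) →
      (∀ t ω, t < T → θ (t + 1) ω - θ t ω ∈ -K (t + 1) ω) →
      (∀ ω i, 0 ≤ θ T ω i) →
      ∀ ω, θ T ω ∈ K T ω ∩ -K T ω :=
  no_arbitrage_of_strictly_consistent_general T P hP atom hmem hpart π hπpos hπtri K hK Z hZri
    hZmart
end
end
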